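/- arXiv:1804.02031 — 3 statements merged into one kernel-verified Lean document; each statement's English description precedes it below -/
import Mathlib

section
/- Let M be a biclosed monoidal category, and let M^op be the contragredient M-bimodule category with actions M◄V = Hom^r(V,M) and V►M = Hom^l(V,M). If (M, τ) is an object of the weak center of M^op and the map σ_M: M → M (the image of Id_M under Hom(M,M) ≅ Hom(1, M►M) → Hom(1, M◄M) ≅ Hom(M,M), the middle map being postcomposition with τ) equals the identity, then every component τ_{M,V}: V►M → M◄V is an isomorphism, i.e., M lies in the strong center. -/
open CategoryTheory MonoidalCategory

universe v u

/-- A biclosed structure on a monoidal category `C`: left and right internal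
Homs, with their adjunction bijections, functorial action on morphisms,
naturality of the adjunctions, and the induced associativity isomorphisms for
the contragredient actions. -/
structure Biclosed (C : Type u) [Category.{v} C] [MonoidalCategory C] where
  homl : C → C → C
  homr : C → C → C
  adjl : ∀ V M W : C, (W ⊗ V ⟶ M) ≃ (W ⟶ homl V M)
  adjr : ∀ V M W : C, (V ⊗ W ⟶ M) ≃ (W ⟶ homr V M)
  homlM : ∀ {V M M' : C}, (M ⟶ M') → (homl V M ⟶ homl V M')
  homlV : ∀ {V V' M : C}, (V ⟶ V') → (homl V' M ⟶ homl V M)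
  homrM : ∀ {V M M' : C}, (M ⟶ M') → (homr V M ⟶ homr V M')
  homrV : ∀ {V V' M : C}, (V ⟶ V') → (homr V' M ⟶ homr V M)
  homlM_id : ∀ {V M : C}, homlM (V := V) (𝟙 M) = 𝟙 (homl V M)
  homlM_comp : ∀ {V M M' M'' : C} (g : M ⟶ M') (g' : M' ⟶ M''),
    homlM (V := V) (g ≫ g') = homlM g ≫ homlM g'
  homrM_id : ∀ {V M : C}, homrM (V := V) (𝟙 M) = 𝟙 (homr V M)
  homrM_comp : ∀ {V M M' M'' : C} (g : M ⟶ M') (g' : M' ⟶ M''),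
    homrM (V := V) (g ≫ g') = homrM g ≫ homrM g'
  homlV_id : ∀ {V M : C}, homlV (M := M) (𝟙 V) = 𝟙 (homl V M)
  homrV_id : ∀ {V M : C}, homrV (M := M) (𝟙 V) = 𝟙 (homr V M)
  homlV_comp : ∀ {V V' V'' M : C} (f : V ⟶ V') (f' : V' ⟶ V''),
    homlV (M := M) (f ≫ f') = homlV f' ≫ homlV f
  homrV_comp : ∀ {V V' V'' M : C} (f : V ⟶ V') (f' : V' ⟶ V''),
    homrV (M := M) (f ≫ f') = homrV f' ≫ homrV f
  adjl_natW : ∀ {V M W W' : C} (f : W' ⟶ W) (g : W ⊗ V ⟶ M),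
    adjl V M W' ((f ▷ V) ≫ g) = f ≫ adjl V M W g
  adjr_natW : ∀ {V M W W' : C} (f : W' ⟶ W) (g : V ⊗ W ⟶ M),
    adjr V M W' ((V ◁ f) ≫ g) = f ≫ adjr V M W g
  adjl_natM : ∀ {V M M' W : C} (g : M ⟶ M') (F : W ⊗ V ⟶ M),
    adjl V M' W (F ≫ g) = adjl V M W F ≫ homlM g
  adjl_natV : ∀ {V V' M W : C} (f : V ⟶ V') (F : W ⊗ V' ⟶ M),
    adjl V M W ((W ◁ f) ≫ F) = adjl V' M W F ≫ homlV f
  adjr_natM : ∀ {V M M' W : C} (g : M ⟶ M') (F : V ⊗ W ⟶ M),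
    adjr V M' W (F ≫ g) = adjr V M W F ≫ homrM g
  adjr_natV : ∀ {V V' M W : C} (f : V ⟶ V') (F : V' ⊗ W ⟶ M),
    adjr V M W ((f ▷ W) ≫ F) = adjr V' M W F ≫ homrV f
  lassoc : ∀ V W M : C, homl (V ⊗ W) M ≅ homl V (homl W M)
  rassoc : ∀ V W M : C, homr (V ⊗ W) M ≅ homr W (homr V M)
  massoc : ∀ V W M : C, homr W (homl V M) ≅ homl V (homr W M)

variable {C : Type u} [Category.{v} C] [MonoidalCategory C]

/-- An object of the weak center of the contragredient bimodule category
`𝓜ᵒᵖ` of a biclosed monoidal category `𝓜`: the centralizing morphisms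
`τ_{M,V} : V ► M → M ◄ V` of `𝓜ᵒᵖ` are realized as morphisms
`Hom^r(V,M) ⟶ Hom^l(V,M)` of `𝓜`. -/
structure Biclosed.OpCenterObj (B : Biclosed C) where
  pt : C
  τ : ∀ V : C, B.homr V pt ⟶ B.homl V pt
  nat : ∀ {V V' : C} (f : V ⟶ V'),
    B.homrV (M := pt) f ≫ τ V = τ V' ≫ B.homlV f
  hex : ∀ V W : C,
    τ (V ⊗ W)
      = (B.rassoc V W pt).hom ≫ B.homrM (τ V) ≫ (B.massoc V W pt).hom
          ≫ B.homlM (τ W) ≫ (B.lassoc V W pt).inv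

/-- The morphism `σ_M : M ⟶ M` attached to an object of the weak center of
`𝓜ᵒᵖ`: the image of the identity of `M` under
`Hom(M,M) ≅ Hom(1, M ► M) → Hom(1, M ◄ M) ≅ Hom(M,M)`, the middle map being
(post)composition with the centralizing morphism `τ_M`. -/
def Biclosed.OpCenterObj.σ (B : Biclosed C) (X : B.OpCenterObj) :
    X.pt ⟶ X.pt :=
  (λ_ X.pt).inv ≫
    (B.adjl X.pt X.pt (𝟙_ C)).symm
      ((B.adjr X.pt X.pt (𝟙_ C)) (ρ_ X.pt).hom ≫ X.τ X.pt)


section Aux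

variable (B : Biclosed C) (X : B.OpCenterObj)

/-- With `σ = id`, the half-braiding acts canonically on global elements:
for every `A` and `g : A ⊗ 𝟙 ⟶ M`, transporting `g` across `τ A` gives
`λ_A ≫ ρ_A⁻¹ ≫ g`. -/
lemma Biclosed.OpCenterObj.tau_one (hσ : X.σ B = 𝟙 X.pt) (A : C)
    (g : A ⊗ 𝟙_ C ⟶ X.pt) :
    (B.adjl A X.pt (𝟙_ C)).symm (B.adjr A X.pt (𝟙_ C) g ≫ X.τ A)
      = (λ_ A).hom ≫ (ρ_ A).inv ≫ g := by
  have hb : (B.adjl X.pt X.pt (𝟙_ C)).symm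
      ((B.adjr X.pt X.pt (𝟙_ C)) (ρ_ X.pt).hom ≫ X.τ X.pt) = (λ_ X.pt).hom := by
    have h2 := hσ
    unfold Biclosed.OpCenterObj.σ at h2
    have h3 := congrArg (fun t => (λ_ X.pt).hom ≫ t) h2
    simpa using h3
  have hg : g = (((ρ_ A).inv ≫ g) ▷ 𝟙_ C) ≫ (ρ_ X.pt).hom := by
    rw [MonoidalCategory.rightUnitor_naturality]; simp
  have step1 : B.adjr A X.pt (𝟙_ C) g ≫ X.τ A
      = B.adjr X.pt X.pt (𝟙_ C) (ρ_ X.pt).hom ≫ X.τ X.pt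
          ≫ B.homlV ((ρ_ A).inv ≫ g) := by
    conv_lhs => rw [hg]
    rw [B.adjr_natV, Category.assoc, X.nat]
  have hbF : B.adjl X.pt X.pt (𝟙_ C) (λ_ X.pt).hom
      = B.adjr X.pt X.pt (𝟙_ C) (ρ_ X.pt).hom ≫ X.τ X.pt := by
    rw [← hb]; simp
  have step2 : B.adjl A X.pt (𝟙_ C) ((𝟙_ C ◁ ((ρ_ A).inv ≫ g)) ≫ (λ_ X.pt).hom)
      = B.adjr X.pt X.pt (𝟙_ C) (ρ_ X.pt).hom ≫ X.τ X.pt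
          ≫ B.homlV ((ρ_ A).inv ≫ g) := by
    rw [B.adjl_natV, hbF, Category.assoc]
  rw [step1, ← step2, Equiv.symm_apply_apply,
    MonoidalCategory.leftUnitor_naturality]

/-- With `σ = id`, post-composition with `τ A` is bijective on global
elements, for every `A`. -/
lemma Biclosed.OpCenterObj.tau_one_bij (hσ : X.σ B = 𝟙 X.pt) (A : C) :
    Function.Bijective
      (fun u : (𝟙_ C ⟶ B.homr A X.pt) => u ≫ X.τ A) := by
  have key : ∀ u : (𝟙_ C ⟶ B.homr A X.pt),
      (B.adjl A X.pt (𝟙_ C)).symm (u ≫ X.τ A)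
        = (λ_ A).hom ≫ (ρ_ A).inv ≫ (B.adjr A X.pt (𝟙_ C)).symm u := by
    intro u
    have := X.tau_one B hσ A ((B.adjr A X.pt (𝟙_ C)).symm u)
    rwa [Equiv.apply_symm_apply] at this
  constructor
  · intro u₁ u₂ h12
    have h12' : u₁ ≫ X.τ A = u₂ ≫ X.τ A := h12
    have e1 := key u₁
    have e2 := key u₂
    rw [h12', e2] at e1
    have : (B.adjr A X.pt (𝟙_ C)).symm u₁ = (B.adjr A X.pt (𝟙_ C)).symm u₂ := by
      have := ((Iso.cancel_iso_hom_left (λ_ A) _ _).mp e1).symm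
      exact (Iso.cancel_iso_inv_left (ρ_ A) _ _).mp this
    exact (B.adjr A X.pt (𝟙_ C)).symm.injective this
  · intro v
    refine ⟨B.adjr A X.pt (𝟙_ C)
      ((ρ_ A).hom ≫ (λ_ A).inv ≫ (B.adjl A X.pt (𝟙_ C)).symm v), ?_⟩
    have hk := key (B.adjr A X.pt (𝟙_ C)
      ((ρ_ A).hom ≫ (λ_ A).inv ≫ (B.adjl A X.pt (𝟙_ C)).symm v))
    rw [Equiv.symm_apply_apply] at hk
    show _ ≫ X.τ A = v
    apply (B.adjl A X.pt (𝟙_ C)).symm.injective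
    rw [hk]
    simp

/-- Hexagon consequence: post-composition with `homrM (τ V)` is injective on
global elements. -/
lemma Biclosed.OpCenterObj.homrM_tau_inj (hσ : X.σ B = 𝟙 X.pt) (V W : C) :
    Function.Injective
      (fun u : (𝟙_ C ⟶ B.homr W (B.homr V X.pt)) => u ≫ B.homrM (X.τ V)) := by
  intro u₁ u₂ h12
  have hbij := X.tau_one_bij B hσ (V ⊗ W)
  have hx : (u₁ ≫ (B.rassoc V W X.pt).inv) ≫ X.τ (V ⊗ W)
      = (u₂ ≫ (B.rassoc V W X.pt).inv) ≫ X.τ (V ⊗ W) := by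
    rw [X.hex V W]
    simp only [Category.assoc, Iso.inv_hom_id_assoc]
    simp only [← Category.assoc]
    rw [show u₁ ≫ B.homrM (X.τ V) = u₂ ≫ B.homrM (X.τ V) from h12]
  have := hbij.injective hx
  calc u₁ = (u₁ ≫ (B.rassoc V W X.pt).inv) ≫ (B.rassoc V W X.pt).hom := by simp
    _ = (u₂ ≫ (B.rassoc V W X.pt).inv) ≫ (B.rassoc V W X.pt).hom := by rw [this]
    _ = u₂ := by simp

/-- Hexagon consequence: post-composition with `homlM (τ W)` is surjective on
global elements. -/
lemma Biclosed.OpCenterObj.homlM_tau_surj (hσ : X.σ B = 𝟙 X.pt) (V W : C) :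
    Function.Surjective
      (fun u : (𝟙_ C ⟶ B.homl V (B.homr W X.pt)) => u ≫ B.homlM (X.τ W)) := by
  intro w
  obtain ⟨x, hx⟩ := (X.tau_one_bij B hσ (V ⊗ W)).surjective
    (w ≫ (B.lassoc V W X.pt).inv)
  simp only at hx
  rw [X.hex V W] at hx
  refine ⟨x ≫ (B.rassoc V W X.pt).hom ≫ B.homrM (X.τ V)
    ≫ (B.massoc V W X.pt).hom, ?_⟩
  simp only [Category.assoc]
  have : (x ≫ (B.rassoc V W X.pt).hom ≫ B.homrM (X.τ V)
      ≫ (B.massoc V W X.pt).hom ≫ B.homlM (X.τ W)) ≫ (B.lassoc V W X.pt).inv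
      = w ≫ (B.lassoc V W X.pt).inv := by
    simpa [Category.assoc] using hx
  have := (Iso.cancel_iso_inv_right _ _ (B.lassoc V W X.pt)).mp this
  simpa [Category.assoc] using this

/-- Transfer injectivity on global elements through the right adjunction. -/
lemma Biclosed.inj_transfer {W P Q : C} (f : P ⟶ Q)
    (h : Function.Injective
      (fun u : (𝟙_ C ⟶ B.homr W P) => u ≫ B.homrM f)) :
    Function.Injective (fun u : (W ⟶ P) => u ≫ f) := by
  intro u₁ u₂ h12
  simp only at h12
  have e : B.adjr W P (𝟙_ C) ((ρ_ W).hom ≫ u₁) ≫ B.homrM f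
      = B.adjr W P (𝟙_ C) ((ρ_ W).hom ≫ u₂) ≫ B.homrM f := by
    rw [← B.adjr_natM, ← B.adjr_natM, Category.assoc, Category.assoc, h12]
  have := h e
  have := (B.adjr W P (𝟙_ C)).injective this
  exact (Iso.cancel_iso_hom_left (ρ_ W) _ _).mp this

/-- Transfer surjectivity on global elements through the left adjunction. -/
lemma Biclosed.surj_transfer {V P Q : C} (f : P ⟶ Q)
    (h : Function.Surjective
      (fun u : (𝟙_ C ⟶ B.homl V P) => u ≫ B.homlM f)) :
    Function.Surjective (fun u : (V ⟶ P) => u ≫ f) := by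
  intro w
  obtain ⟨u, hu⟩ := h (B.adjl V Q (𝟙_ C) ((λ_ V).hom ≫ w))
  have hu' : u ≫ B.homlM f = B.adjl V Q (𝟙_ C) ((λ_ V).hom ≫ w) := hu
  refine ⟨(λ_ V).inv ≫ (B.adjl V P (𝟙_ C)).symm u, ?_⟩
  have e : B.adjl V Q (𝟙_ C) (((B.adjl V P (𝟙_ C)).symm u) ≫ f)
      = B.adjl V Q (𝟙_ C) ((λ_ V).hom ≫ w) := by
    rw [B.adjl_natM, Equiv.apply_symm_apply, hu']
  have e2 := (B.adjl V Q (𝟙_ C)).injective e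
  show ((λ_ V).inv ≫ (B.adjl V P (𝟙_ C)).symm u) ≫ f = w
  rw [Category.assoc, e2]
  simp

end Aux

/-- Let `𝓜` be a biclosed monoidal category and `𝓜ᵒᵖ` the
contragredient `𝓜`-bimodule category. If `(M, τ)` is an object of the weak
center of `𝓜ᵒᵖ` and `σ_M = Id`, then every component `τ_{M,V}` is an
isomorphism, i.e. `M` lies in the strong center. -/
theorem weak_center_stable_implies_strong
    (B : Biclosed C) (X : B.OpCenterObj) (hσ : X.σ B = 𝟙 X.pt) :
    ∀ V : C, IsIso (X.τ V) := by
  intro V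
  have hinj : ∀ W : C, Function.Injective
      (fun u : (W ⟶ B.homr V X.pt) => u ≫ X.τ V) := fun W =>
    B.inj_transfer (X.τ V) (X.homrM_tau_inj B hσ V W)
  have hsurj : ∀ W : C, Function.Surjective
      (fun u : (W ⟶ B.homr V X.pt) => u ≫ X.τ V) := fun W =>
    B.surj_transfer (X.τ V) (X.homlM_tau_surj B hσ W V)
  obtain ⟨κ, hκ⟩ := hsurj (B.homl V X.pt) (𝟙 _)
  simp only at hκ
  have hr : X.τ V ≫ κ = 𝟙 _ := by
    apply hinj (B.homr V X.pt)
    simp only [Category.assoc, hκ, Category.comp_id, Category.id_comp]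
  exact ⟨⟨κ, hr, hκ⟩⟩
end

section
/- Let H be a quasi-Hopf algebra with invertible antipode S and let M be an object of the bimodule category ^#_H M (left H-modules, with V▷M = V^#⊗M and M◁V = M⊗V). Then natural transformations τ: (−)▷M → M◁(−) are in bijection with k-linear maps ρ: M → M⊗H, written ρ(m) = m⟨0⟩⊗m⟨1⟩, satisfying h¹m⟨0⟩ ⊗ h²m⟨1⟩ = (h²m)⟨0⟩ ⊗ (h²m)⟨1⟩S²(h¹) for all h ∈ H, m ∈ M. The bijection sends τ to ρ(m) = τ_H(1⊗m), and conversely ρ to τ_V(v⊗m) = m⟨0⟩ ⊗ m⟨1⟩v. -/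
open TensorProduct

noncomputable section

/-- A quasi-bialgebra over a field `k`. -/
structure QuasiBialgebra (k H : Type) [Field k] [Ring H] [Algebra k H] where
  comul : H →ₐ[k] H ⊗[k] H
  counit : H →ₐ[k] k
  assocEl : (H ⊗[k] (H ⊗[k] H))ˣ
  counit_left : ∀ a : H,
    (Algebra.TensorProduct.lid k H)
      ((Algebra.TensorProduct.map counit (AlgHom.id k H)) (comul a)) = a
  counit_right : ∀ a : H,
    (Algebra.TensorProduct.rid k k H)
      ((Algebra.TensorProduct.map (AlgHom.id k H) counit) (comul a)) = a
  quasi_coassoc : ∀ a : H,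
    (Algebra.TensorProduct.map (AlgHom.id k H) comul) (comul a)
      = (assocEl : H ⊗[k] (H ⊗[k] H))
        * (Algebra.TensorProduct.assoc k k k H H H)
            ((Algebra.TensorProduct.map comul (AlgHom.id k H)) (comul a))
        * ((assocEl⁻¹ : (H ⊗[k] (H ⊗[k] H))ˣ) : H ⊗[k] (H ⊗[k] H))
  counit_mid_assocEl :
    (Algebra.TensorProduct.map (AlgHom.id k H)
      (((Algebra.TensorProduct.lid k H).toAlgHom).comp
        (Algebra.TensorProduct.map counit (AlgHom.id k H))))
      (assocEl : H ⊗[k] (H ⊗[k] H)) = 1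
  pentagon :
    (Algebra.TensorProduct.map (AlgHom.id k H)
       (Algebra.TensorProduct.map (AlgHom.id k H) comul))
      (assocEl : H ⊗[k] (H ⊗[k] H))
    * (Algebra.TensorProduct.assoc k k k H H (H ⊗[k] H))
        ((Algebra.TensorProduct.map comul (AlgHom.id k (H ⊗[k] H)))
          (assocEl : H ⊗[k] (H ⊗[k] H)))
    = (Algebra.TensorProduct.includeRight (R := k) (A := H)
        (assocEl : H ⊗[k] (H ⊗[k] H)))
      * (Algebra.TensorProduct.map (AlgHom.id k H)
           (Algebra.TensorProduct.assoc k k k H H H).toAlgHom)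
          ((Algebra.TensorProduct.map (AlgHom.id k H)
             (Algebra.TensorProduct.map comul (AlgHom.id k H)))
            (assocEl : H ⊗[k] (H ⊗[k] H)))
      * (Algebra.TensorProduct.map (AlgHom.id k H)
           (Algebra.TensorProduct.assoc k k k H H H).toAlgHom)
          ((Algebra.TensorProduct.assoc k k k H (H ⊗[k] H) H)
            ((Algebra.TensorProduct.includeLeft (R := k) (S := k))
              (assocEl : H ⊗[k] (H ⊗[k] H))))

/-- A quasi-Hopf algebra over a field `k`, with invertible antipode. -/
structure QuasiHopf (k H : Type) [Field k] [Ring H] [Algebra k H]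
    extends QuasiBialgebra k H where
  S : H →ₗ[k] H
  S_one : S 1 = 1
  S_mul : ∀ a b : H, S (a * b) = S b * S a
  S_bij : Function.Bijective S
  alpha : H
  beta : H
  antipode_left : ∀ h : H,
    ((LinearMap.mul' k H).comp
      (TensorProduct.map ((LinearMap.mulRight k alpha).comp S) LinearMap.id))
      (comul h) = counit h • alpha
  antipode_right : ∀ h : H,
    ((LinearMap.mul' k H).comp
      (TensorProduct.map LinearMap.id ((LinearMap.mulLeft k beta).comp S)))
      (comul h) = counit h • beta
  phi_antipode :
    ((LinearMap.mul' k H).comp ((LinearMap.mul' k H).lTensor H))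
      ((TensorProduct.map LinearMap.id
        (TensorProduct.map ((LinearMap.mulLeft k beta).comp S)
          (LinearMap.mulLeft k alpha)))
        (assocEl : H ⊗[k] (H ⊗[k] H))) = 1
  phiInv_antipode :
    ((LinearMap.mul' k H).comp ((LinearMap.mul' k H).lTensor H))
      ((TensorProduct.map S
        (TensorProduct.map (LinearMap.mulLeft k alpha)
          (LinearMap.mulLeft k beta)))
        (((assocEl⁻¹ : (H ⊗[k] (H ⊗[k] H))ˣ) : H ⊗[k] (H ⊗[k] H)))) = 1

variable {k H : Type} [Field k] [Ring H] [Algebra k H]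

/-- The diagonal action map of `H` on the tensor product of two `H`-modules
(given by representations into `Module.End`): `h · (m ⊗ n) = h¹ m ⊗ h² n`.
A priori this is only a linear map into the endomorphisms. -/
def QuasiBialgebra.tAct (Q : QuasiBialgebra k H) {M N : Type}
    [AddCommGroup M] [Module k M] [AddCommGroup N] [Module k N]
    (f : H →ₗ[k] Module.End k M) (g : H →ₗ[k] Module.End k N) :
    H →ₗ[k] Module.End k (M ⊗[k] N) :=
  (TensorProduct.homTensorHomMap (RingHom.id k) M N M N).comp
    ((TensorProduct.map f g).comp Q.comul.toLinearMap)

/-- The componentwise action of an element of `H ⊗ (H ⊗ H)` on `M ⊗ (N ⊗ L)`. -/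
def actTriple {M N L : Type}
    [AddCommGroup M] [Module k M] [AddCommGroup N] [Module k N]
    [AddCommGroup L] [Module k L]
    (f : H →ₗ[k] Module.End k M) (g : H →ₗ[k] Module.End k N)
    (e : H →ₗ[k] Module.End k L) :
    H ⊗[k] (H ⊗[k] H) →ₗ[k] Module.End k (M ⊗[k] (N ⊗[k] L)) :=
  (TensorProduct.homTensorHomMap (RingHom.id k) M (N ⊗[k] L) M (N ⊗[k] L)).comp
    (TensorProduct.map f
      ((TensorProduct.homTensorHomMap (RingHom.id k) N L N L).comp
        (TensorProduct.map g e)))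

/-- The trivial representation of `H` on `k`, via the counit. -/
def QuasiBialgebra.trivRep (Q : QuasiBialgebra k H) :
    H →ₐ[k] Module.End k k :=
  (Algebra.lmul k k).comp Q.counit

/-- Equivariance of a linear map with respect to two (linear) actions of `H`. -/
def LinEquivariant {k H : Type} [Field k] [Ring H] [Algebra k H]
    {V W : Type} [AddCommGroup V] [Module k V] [AddCommGroup W] [Module k W]
    (ρV : H →ₗ[k] Module.End k V) (ρW : H →ₗ[k] Module.End k W)
    (f : V →ₗ[k] W) : Prop :=
  ∀ (h : H) (v : V), f (ρV h v) = ρW h (f v)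

/-- The left internal Hom action of `H` on `Hom_k(M,N)`:
`(h · φ)(m) = h¹ φ(S(h²) m)`. -/
def QuasiHopf.homLAct (Qh : QuasiHopf k H) {M N : Type}
    [AddCommGroup M] [Module k M] [AddCommGroup N] [Module k N]
    (ρM : H →ₐ[k] Module.End k M) (ρN : H →ₐ[k] Module.End k N) :
    H →ₗ[k] Module.End k (M →ₗ[k] N) :=
  (TensorProduct.lift
    (LinearMap.mk₂ k
      (fun a b => (LinearMap.llcomp k M N N (ρN a)).comp
          (LinearMap.lcomp k N (ρM (Qh.S b))))
      (fun a a' b => by ext φ m; simp [map_add]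
      )
      (fun c a b => by ext φ m; simp [map_smul]
      )
      (fun a b b' => by ext φ m; simp [map_add]
      )
      (fun c a b => by ext φ m; simp [map_smul]
      ))).comp Qh.comul.toLinearMap

/-- The right internal Hom action of `H` on `Hom_k(M,N)`:
`(h · φ)(m) = h² φ(S⁻¹(h¹) m)`, where `Sinv` is the inverse of the antipode. -/
def QuasiHopf.homRAct (Qh : QuasiHopf k H) (Sinv : H →ₗ[k] H) {M N : Type}
    [AddCommGroup M] [Module k M] [AddCommGroup N] [Module k N]
    (ρM : H →ₐ[k] Module.End k M) (ρN : H →ₐ[k] Module.End k N) :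
    H →ₗ[k] Module.End k (M →ₗ[k] N) :=
  (TensorProduct.lift
    (LinearMap.mk₂ k
      (fun a b => (LinearMap.llcomp k M N N (ρN b)).comp
          (LinearMap.lcomp k N (ρM (Sinv a))))
      (fun a a' b => by ext φ m; simp [map_add]
      )
      (fun c a b => by ext φ m; simp [map_smul]
      )
      (fun a b b' => by ext φ m; simp [map_add]
      )
      (fun c a b => by ext φ m; simp [map_smul]
      ))).comp Qh.comul.toLinearMap

/-- `S²` as an algebra endomorphism of a quasi-Hopf algebra. -/
def QuasiHopf.S2 (Qh : QuasiHopf k H) : H →ₐ[k] H where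
  toFun h := Qh.S (Qh.S h)
  map_one' := by simp [Qh.S_one]
  map_mul' a b := by simp [Qh.S_mul]
  map_zero' := by simp
  map_add' a b := by simp
  commutes' c := by
    simp [Algebra.algebraMap_eq_smul_one, map_smul, Qh.S_one]

/-- The `#`-twist of a module: the same underlying space, with the action
`h · v = S²(h) v`. -/
def QuasiHopf.hashRep (Qh : QuasiHopf k H) {V : Type}
    [AddCommGroup V] [Module k V]
    (ρV : H →ₐ[k] Module.End k V) : H →ₐ[k] Module.End k V :=
  ρV.comp Qh.S2

open Finset in
/-- The type-I anti-Yetter–Drinfeld compatibility condition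
`h¹ m⟨0⟩ ⊗ h² m⟨1⟩ = (h² m)⟨0⟩ ⊗ (h² m)⟨1⟩ S²(h¹)`, expressed using arbitrary
finite decompositions of the coproduct. -/
def QuasiHopf.CompatI (Qh : QuasiHopf k H) {M : Type}
    [AddCommGroup M] [Module k M]
    (ρM : H →ₐ[k] Module.End k M) (coact : M →ₗ[k] M ⊗[k] H) : Prop :=
  ∀ (h : H) (m : M) (ι : Type) (s : Finset ι) (h1 h2 : ι → H),
    Qh.comul h = ∑ i ∈ s, h1 i ⊗ₜ[k] h2 i →
    ∑ i ∈ s, (TensorProduct.map (ρM (h1 i)) (LinearMap.mulLeft k (h2 i)))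
        (coact m)
      = ∑ i ∈ s,
          (LinearMap.lTensor M
            (LinearMap.mulRight k (Qh.S (Qh.S (h1 i)))))
            (coact (ρM (h2 i) m))

/-- The family of maps `τ_V : V^# ⊗ M → M ⊗ V`, `v ⊗ m ↦ m⟨0⟩ ⊗ m⟨1⟩ v`,
associated to a coaction `ρ : M → M ⊗ H`. -/
def QuasiHopf.tauOfCoact (Qh : QuasiHopf k H) {M : Type}
    [AddCommGroup M] [Module k M] (coact : M →ₗ[k] M ⊗[k] H)
    (V : Type) [AddCommGroup V] [Module k V]
    (ρV : H →ₐ[k] Module.End k V) : V ⊗[k] M →ₗ[k] M ⊗[k] V :=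
  TensorProduct.lift
    (LinearMap.mk₂ k
      (fun v m =>
        (LinearMap.lTensor M ((ρV.toLinearMap :
            H →ₗ[k] V →ₗ[k] V).flip v)) (coact m))
      (fun v v' m => by
        simp [map_add, LinearMap.lTensor_add, LinearMap.add_apply])
      (fun c v m => by
        simp [map_smul, LinearMap.lTensor_smul, LinearMap.smul_apply])
      (fun v m m' => by simp [map_add])
      (fun c v m => by simp [map_smul]))

/-- The coaction `m ↦ τ_H(1 ⊗ m)` associated to a centralizing family `τ`. -/
def QuasiHopf.coactOfTau (Qh : QuasiHopf k H) {M : Type}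
    [AddCommGroup M] [Module k M]
    (τ : ∀ (V : Type) [AddCommGroup V] [Module k V],
      (H →ₐ[k] Module.End k V) → (V ⊗[k] M →ₗ[k] M ⊗[k] V)) :
    M →ₗ[k] M ⊗[k] H :=
  (τ H (Algebra.lmul k H)).comp ((TensorProduct.mk k H M) 1)

/-- A family `τ_V : V ▷ M → M ◁ V` (with `V ▷ M = V^# ⊗ M`, `M ◁ V = M ⊗ V`)
is a natural transformation: each component is `H`-equivariant, and the family
is natural in `V`. -/
def QuasiHopf.IsCentralFam (Qh : QuasiHopf k H) {M : Type}
    [AddCommGroup M] [Module k M] (ρM : H →ₐ[k] Module.End k M)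
    (τ : ∀ (V : Type) [AddCommGroup V] [Module k V],
      (H →ₐ[k] Module.End k V) → (V ⊗[k] M →ₗ[k] M ⊗[k] V)) : Prop :=
  (∀ (V : Type) [AddCommGroup V] [Module k V]
      (ρV : H →ₐ[k] Module.End k V),
    LinEquivariant (Qh.tAct (Qh.hashRep ρV).toLinearMap ρM.toLinearMap)
      (Qh.tAct ρM.toLinearMap ρV.toLinearMap) (τ V ρV)) ∧
  (∀ (V : Type) [AddCommGroup V] [Module k V]
      (ρV : H →ₐ[k] Module.End k V)
      (W : Type) [AddCommGroup W] [Module k W]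
      (ρW : H →ₐ[k] Module.End k W)
      (f : V →ₗ[k] W),
    LinEquivariant ρV.toLinearMap ρW.toLinearMap f →
    (τ W ρW).comp (LinearMap.rTensor M f)
      = (LinearMap.lTensor M f).comp (τ V ρV))

/-
The maps `a ↦ a • v` out of the regular module are exactly the `H`-linear maps `H → V`, so by
naturality a family `τ` is determined by `τ_H(1 ⊗ -)`, i.e. by the coaction `ρ`, and
`τ_V(v ⊗ m) = m⟨0⟩ ⊗ m⟨1⟩ v`. Since `(- • v)` is `H`-linear and turns right multiplication by
`c` into `c • v`, the `H`-linearity of `τ_V` at `v ⊗ m` is the image of the type-I condition at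
`m` under `id ⊗ (- • v)`; for `V = H` and `v = 1` this map is the identity.
-/

lemma QuasiBialgebra.tAct_eq_sum (Q : QuasiBialgebra k H) {M N : Type}
    [AddCommGroup M] [Module k M] [AddCommGroup N] [Module k N]
    (f : H →ₗ[k] Module.End k M) (g : H →ₗ[k] Module.End k N)
    {h : H} {ι : Type} {s : Finset ι} {h1 h2 : ι → H}
    (hd : Q.comul h = ∑ i ∈ s, h1 i ⊗ₜ[k] h2 i) :
    Q.tAct f g h = ∑ i ∈ s, TensorProduct.map (f (h1 i)) (g (h2 i)) := by
  simp [QuasiBialgebra.tAct, hd, map_sum]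

section OrbitMap

variable {V W : Type} [AddCommGroup V] [Module k V] [AddCommGroup W] [Module k W]

def orbitMap (ρV : H →ₐ[k] Module.End k V) (v : V) : H →ₗ[k] V :=
  (ρV.toLinearMap : H →ₗ[k] V →ₗ[k] V).flip v

@[simp]
lemma orbitMap_apply (ρV : H →ₐ[k] Module.End k V) (v : V) (a : H) :
    orbitMap ρV v a = ρV a v := rfl

lemma orbitMap_one (ρV : H →ₐ[k] Module.End k V) (v : V) : orbitMap ρV v 1 = v := by
  simp

lemma orbitMap_lmul (a : H) : orbitMap (Algebra.lmul k H) a = LinearMap.mulRight k a := by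
  ext b; simp

lemma orbitMap_comp_mulLeft (ρV : H →ₐ[k] Module.End k V) (v : V) (b : H) :
    orbitMap ρV v ∘ₗ LinearMap.mulLeft k b = ρV b ∘ₗ orbitMap ρV v := by
  ext a; simp [Module.End.mul_apply]

lemma orbitMap_comp_mulRight (ρV : H →ₐ[k] Module.End k V) (v : V) (c : H) :
    orbitMap ρV v ∘ₗ LinearMap.mulRight k c = orbitMap ρV (ρV c v) := by
  ext a; simp [Module.End.mul_apply]

lemma lTensor_orbitMap_lTensor_mulRight {M : Type} [AddCommGroup M] [Module k M]
    (ρV : H →ₐ[k] Module.End k V) (v : V) (c : H) (x : M ⊗[k] H) :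
    (orbitMap ρV v).lTensor M ((LinearMap.mulRight k c).lTensor M x)
      = (orbitMap ρV (ρV c v)).lTensor M x := by
  rw [← LinearMap.comp_apply, ← LinearMap.lTensor_comp, orbitMap_comp_mulRight]

lemma lTensor_orbitMap_map_mulLeft {M : Type} [AddCommGroup M] [Module k M]
    (ρV : H →ₐ[k] Module.End k V) (v : V) (f : Module.End k M) (b : H) (x : M ⊗[k] H) :
    (orbitMap ρV v).lTensor M (TensorProduct.map f (LinearMap.mulLeft k b) x)
      = TensorProduct.map f (ρV b) ((orbitMap ρV v).lTensor M x) := by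
  rw [← LinearMap.comp_apply, LinearMap.lTensor_comp_map, orbitMap_comp_mulLeft,
    ← LinearMap.map_comp_lTensor, LinearMap.comp_apply]

lemma linEquivariant_orbitMap (ρV : H →ₐ[k] Module.End k V) (v : V) :
    LinEquivariant (Algebra.lmul k H).toLinearMap ρV.toLinearMap (orbitMap ρV v) := by
  intro b a
  simp [Module.End.mul_apply]

lemma LinEquivariant.comp_orbitMap {ρV : H →ₐ[k] Module.End k V}
    {ρW : H →ₐ[k] Module.End k W} {f : V →ₗ[k] W}
    (hf : LinEquivariant ρV.toLinearMap ρW.toLinearMap f) (v : V) :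
    f ∘ₗ orbitMap ρV v = orbitMap ρW (f v) := by
  ext a; exact hf a v

end OrbitMap

namespace QuasiHopf

variable (Qh : QuasiHopf k H) {M V : Type} [AddCommGroup M] [Module k M]
  [AddCommGroup V] [Module k V]

lemma tauOfCoact_tmul (coact : M →ₗ[k] M ⊗[k] H) (ρV : H →ₐ[k] Module.End k V)
    (v : V) (m : M) :
    Qh.tauOfCoact coact V ρV (v ⊗ₜ[k] m) = (orbitMap ρV v).lTensor M (coact m) := rfl

lemma tauOfCoact_lmul_one_tmul (coact : M →ₗ[k] M ⊗[k] H) (m : M) :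
    Qh.tauOfCoact coact H (Algebra.lmul k H) (1 ⊗ₜ[k] m) = coact m := by
  rw [tauOfCoact_tmul, orbitMap_lmul, LinearMap.mulRight_one, LinearMap.lTensor_id,
    LinearMap.id_apply]

lemma coactOfTau_tauOfCoact (coact : M →ₗ[k] M ⊗[k] H) :
    Qh.coactOfTau (fun V _ _ ρV => Qh.tauOfCoact coact V ρV) = coact :=
  LinearMap.ext (Qh.tauOfCoact_lmul_one_tmul coact)

lemma tauOfCoact_natural (coact : M →ₗ[k] M ⊗[k] H) {W : Type} [AddCommGroup W]
    [Module k W] {ρV : H →ₐ[k] Module.End k V} {ρW : H →ₐ[k] Module.End k W}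
    {f : V →ₗ[k] W} (hf : LinEquivariant ρV.toLinearMap ρW.toLinearMap f) :
    (Qh.tauOfCoact coact W ρW).comp (f.rTensor M)
      = (f.lTensor M).comp (Qh.tauOfCoact coact V ρV) := by
  refine TensorProduct.ext' fun v m => ?_
  simp only [LinearMap.comp_apply, LinearMap.rTensor_tmul, tauOfCoact_tmul,
    ← hf.comp_orbitMap, LinearMap.lTensor_comp]

variable {Qh}

lemma tauOfCoact_tAct_hashRep_tmul (coact : M →ₗ[k] M ⊗[k] H) (ρM : H →ₐ[k] Module.End k M)
    (ρV : H →ₐ[k] Module.End k V) (v : V) (m : M) {h : H} {ι : Type} {s : Finset ι}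
    {h1 h2 : ι → H} (hd : Qh.comul h = ∑ i ∈ s, h1 i ⊗ₜ[k] h2 i) :
    Qh.tauOfCoact coact V ρV
        (Qh.tAct (Qh.hashRep ρV).toLinearMap ρM.toLinearMap h (v ⊗ₜ[k] m))
      = (orbitMap ρV v).lTensor M
          (∑ i ∈ s, (LinearMap.mulRight k (Qh.S (Qh.S (h1 i)))).lTensor M
            (coact (ρM (h2 i) m))) := by
  simp only [QuasiBialgebra.tAct_eq_sum _ _ _ hd, LinearMap.sum_apply, map_sum,
    TensorProduct.map_tmul, tauOfCoact_tmul, lTensor_orbitMap_lTensor_mulRight]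
  rfl

lemma tAct_tauOfCoact_tmul (coact : M →ₗ[k] M ⊗[k] H) (ρM : H →ₐ[k] Module.End k M)
    (ρV : H →ₐ[k] Module.End k V) (v : V) (m : M) {h : H} {ι : Type} {s : Finset ι}
    {h1 h2 : ι → H} (hd : Qh.comul h = ∑ i ∈ s, h1 i ⊗ₜ[k] h2 i) :
    Qh.tAct ρM.toLinearMap ρV.toLinearMap h (Qh.tauOfCoact coact V ρV (v ⊗ₜ[k] m))
      = (orbitMap ρV v).lTensor M
          (∑ i ∈ s, TensorProduct.map (ρM (h1 i)) (LinearMap.mulLeft k (h2 i)) (coact m)) := by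
  simp only [QuasiBialgebra.tAct_eq_sum _ _ _ hd, LinearMap.sum_apply, map_sum,
    tauOfCoact_tmul, lTensor_orbitMap_map_mulLeft, AlgHom.toLinearMap_apply]

lemma linEquivariant_tauOfCoact {ρM : H →ₐ[k] Module.End k M} {coact : M →ₗ[k] M ⊗[k] H}
    (hc : Qh.CompatI ρM coact) (ρV : H →ₐ[k] Module.End k V) :
    LinEquivariant (Qh.tAct (Qh.hashRep ρV).toLinearMap ρM.toLinearMap)
      (Qh.tAct ρM.toLinearMap ρV.toLinearMap) (Qh.tauOfCoact coact V ρV) := by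
  intro h x
  obtain ⟨s, hd⟩ := TensorProduct.exists_finset (Qh.comul h)
  induction x using TensorProduct.induction_on with
  | zero => simp
  | add x y hx hy => simp only [map_add, hx, hy]
  | tmul v m =>
    rw [tauOfCoact_tAct_hashRep_tmul coact ρM ρV v m hd, tAct_tauOfCoact_tmul coact ρM ρV v m hd,
      hc h m _ s Prod.fst Prod.snd hd]

lemma compatI_of_linEquivariant_tauOfCoact_lmul {ρM : H →ₐ[k] Module.End k M}
    {coact : M →ₗ[k] M ⊗[k] H}
    (he : LinEquivariant (Qh.tAct (Qh.hashRep (Algebra.lmul k H)).toLinearMap ρM.toLinearMap)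
      (Qh.tAct ρM.toLinearMap (Algebra.lmul k H).toLinearMap)
      (Qh.tauOfCoact coact H (Algebra.lmul k H))) :
    Qh.CompatI ρM coact := by
  intro h m ι s h1 h2 hd
  have key := he h (1 ⊗ₜ[k] m)
  rw [tauOfCoact_tAct_hashRep_tmul coact ρM _ 1 m hd, tAct_tauOfCoact_tmul coact ρM _ 1 m hd,
    orbitMap_lmul, LinearMap.mulRight_one, LinearMap.lTensor_id] at key
  exact key.symm

lemma eq_tauOfCoact_coactOfTau {ρM : H →ₐ[k] Module.End k M}
    {τ : ∀ (V : Type) [AddCommGroup V] [Module k V],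
      (H →ₐ[k] Module.End k V) → (V ⊗[k] M →ₗ[k] M ⊗[k] V)}
    (hτ : Qh.IsCentralFam ρM τ) (ρV : H →ₐ[k] Module.End k V) :
    τ V ρV = Qh.tauOfCoact (Qh.coactOfTau τ) V ρV := by
  refine TensorProduct.ext' fun v m => ?_
  have hnat := LinearMap.congr_fun
    (hτ.2 H (Algebra.lmul k H) V ρV _ (linEquivariant_orbitMap ρV v)) (1 ⊗ₜ[k] m)
  rwa [LinearMap.comp_apply, LinearMap.rTensor_tmul, orbitMap_one] at hnat

lemma isCentralFam_tauOfCoact {ρM : H →ₐ[k] Module.End k M} {coact : M →ₗ[k] M ⊗[k] H}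
    (hc : Qh.CompatI ρM coact) :
    Qh.IsCentralFam ρM (fun V _ _ ρV => Qh.tauOfCoact coact V ρV) :=
  ⟨fun _ _ _ ρV => linEquivariant_tauOfCoact hc ρV,
    fun _ _ _ _ _ _ _ _ _ hf => Qh.tauOfCoact_natural coact hf⟩

end QuasiHopf

/-- Lemma 4.1. For a quasi-Hopf algebra `H` and a left
`H`-module `M`, natural transformations `τ : (−) ▷ M → M ◁ (−)` are in
bijection with `k`-linear maps `ρ : M → M ⊗ H` satisfying
`h¹ m⟨0⟩ ⊗ h² m⟨1⟩ = (h² m)⟨0⟩ ⊗ (h² m)⟨1⟩ S²(h¹)`; the bijection sends `τ`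
to `ρ(m) = τ_H(1 ⊗ m)`, and conversely `ρ` to `τ_V(v ⊗ m) = m⟨0⟩ ⊗ m⟨1⟩ v`. -/
theorem central_families_biject_with_typeI_coactions
    (M : Type) [AddCommGroup M] [Module k M]
    (Qh : QuasiHopf k H) (ρM : H →ₐ[k] Module.End k M) :
    (∀ τ : ∀ (V : Type) [AddCommGroup V] [Module k V],
        (H →ₐ[k] Module.End k V) → (V ⊗[k] M →ₗ[k] M ⊗[k] V),
      Qh.IsCentralFam ρM τ →
        Qh.CompatI ρM (Qh.coactOfTau τ) ∧
        ∀ (V : Type) [AddCommGroup V] [Module k V]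
          (ρV : H →ₐ[k] Module.End k V),
          τ V ρV = Qh.tauOfCoact (Qh.coactOfTau τ) V ρV) ∧
    (∀ coact : M →ₗ[k] M ⊗[k] H,
      Qh.CompatI ρM coact →
        Qh.IsCentralFam ρM (fun V _ _ ρV => Qh.tauOfCoact coact V ρV) ∧
        Qh.coactOfTau (fun V _ _ ρV => Qh.tauOfCoact coact V ρV) = coact) := by
  refine ⟨fun τ hτ => ⟨?_, fun V _ _ ρV => QuasiHopf.eq_tauOfCoact_coactOfTau hτ ρV⟩,
    fun coact hc => ⟨QuasiHopf.isCentralFam_tauOfCoact hc, Qh.coactOfTau_tauOfCoact coact⟩⟩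
  apply QuasiHopf.compatI_of_linEquivariant_tauOfCoact_lmul
  rw [← QuasiHopf.eq_tauOfCoact_coactOfTau hτ]
  exact hτ.1 H (Algebra.lmul k H)
end
end

section
/- Let H be a Hopf algebra with invertible antipode S. A k-linear map ρ: M → M⊗H satisfies the type I compatibility h¹m⟨0⟩ ⊗ h²m⟨1⟩ = (h²m)⟨0⟩ ⊗ (h²m)⟨1⟩S²(h¹) for all h, m if and only if it satisfies the type II compatibility (hm)⟨0⟩ ⊗ (hm)⟨1⟩ = h²¹m⟨0⟩ ⊗ h²²m⟨1⟩S(h¹) for all h, m. -/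
open TensorProduct

noncomputable section

variable {k H : Type} [Field k] [Ring H] [Algebra k H]

/-- The componentwise action of an element of `H ⊗ H` on `M ⊗ H`, where the
second factor acts by left multiplication. -/
def QuasiHopf.diagActMH (Qh : QuasiHopf k H) {M : Type}
    [AddCommGroup M] [Module k M] (ρM : H →ₐ[k] Module.End k M) :
    H ⊗[k] H →ₗ[k] Module.End k (M ⊗[k] H) :=
  (TensorProduct.homTensorHomMap (RingHom.id k) M H M H).comp
    (TensorProduct.map ρM.toLinearMap (LinearMap.mul k H))

/-- The action of `H` on `M ⊗^r H`:
`x · (m ⊗ h) = x²¹ m ⊗ x²² h S(x¹)`. -/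
def QuasiHopf.rTensorHopfAct (Qh : QuasiHopf k H) {M : Type}
    [AddCommGroup M] [Module k M] (ρM : H →ₐ[k] Module.End k M) :
    H →ₗ[k] Module.End k (M ⊗[k] H) :=
  (TensorProduct.lift
    (LinearMap.mk₂ k
      (fun a b =>
        (Qh.diagActMH ρM (Qh.comul b)).comp
          (LinearMap.lTensor M (LinearMap.mulRight k (Qh.S a))))
      (fun a a' b => by
        ext m x
        simp [map_add, mul_add, TensorProduct.tmul_add])
      (fun c a b => by
        ext m x
        simp [map_smul, TensorProduct.tmul_smul])
      (fun a b b' => by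
        simp [map_add, LinearMap.add_comp])
      (fun c a b => by
        simp [map_smul, LinearMap.smul_comp]))).comp Qh.comul.toLinearMap

open Finset in
/-- The type-II anti-Yetter–Drinfeld compatibility condition
`(h m)[0] ⊗ (h m)[1] = h²¹ m[0] ⊗ h²² m[1] S(h¹)`, expressed using arbitrary
finite decompositions of the coproduct. -/
def QuasiHopf.CompatII (Qh : QuasiHopf k H) {M : Type}
    [AddCommGroup M] [Module k M]
    (ρM : H →ₐ[k] Module.End k M) (coact : M →ₗ[k] M ⊗[k] H) : Prop :=
  ∀ (h : H) (m : M) (ι : Type) (s : Finset ι) (h1 h2 : ι → H),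
    Qh.comul h = ∑ i ∈ s, h1 i ⊗ₜ[k] h2 i →
    coact (ρM h m)
      = ∑ i ∈ s,
          (Qh.diagActMH ρM (Qh.comul (h2 i)))
            ((LinearMap.lTensor M (LinearMap.mulRight k (Qh.S (h1 i))))
              (coact m))


/-!
Write `A_m(h) = h¹m⟨0⟩ ⊗ h²m⟨1⟩` and `B_m(h) = (hm)⟨0⟩ ⊗ (hm)⟨1⟩`, both linear in `h`, and let `H`
act on `M ⊗ H` from the right through the second factor. Then type I reads
`A_m(h) = B_m(h²)·S²(h¹)` and type II reads `B_m(h) = A_m(h²)·S(h¹)`, and the two convolutions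
undo each other: `S²(h²¹)S(h¹) = S(h¹S(h²¹))` and `S(h²¹)S²(h¹) = S(S(h¹)h²¹)`, while
coassociativity and the antipode axioms give `h¹S(h²¹) ⊗ h²² = S(h¹)h²¹ ⊗ h²² = 1 ⊗ h`.
-/

namespace QuasiBialgebra

variable (Q : QuasiBialgebra k H)

theorem comul_coassoc
    (hPhi : ((Q.assocEl : (H ⊗[k] (H ⊗[k] H))ˣ) : H ⊗[k] (H ⊗[k] H)) = 1) :
    TensorProduct.assoc k H H H ∘ₗ Q.comul.toLinearMap.rTensor H ∘ₗ Q.comul.toLinearMap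
      = Q.comul.toLinearMap.lTensor H ∘ₗ Q.comul.toLinearMap := by
  have hl : (Algebra.TensorProduct.map (AlgHom.id k H) Q.comul).toLinearMap
      = Q.comul.toLinearMap.lTensor H := TensorProduct.ext' fun _ _ => rfl
  have hr : (Algebra.TensorProduct.map Q.comul (AlgHom.id k H)).toLinearMap
      = Q.comul.toLinearMap.rTensor H := TensorProduct.ext' fun _ _ => rfl
  ext a
  have key := Q.quasi_coassoc a
  rw [show Q.assocEl = 1 from Units.ext hPhi] at key
  simp only [inv_one, Units.val_one, one_mul, mul_one] at key
  change TensorProduct.assoc k H H H (Q.comul.toLinearMap.rTensor H (Q.comul a))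
    = Q.comul.toLinearMap.lTensor H (Q.comul a)
  rw [← hl, ← hr]
  exact key.symm

theorem rTensor_counit_comp_comul :
    Q.counit.toLinearMap.rTensor H ∘ₗ Q.comul.toLinearMap = TensorProduct.mk k k H 1 := by
  ext a
  refine (TensorProduct.lid k H).injective ?_
  simp only [LinearMap.comp_apply, TensorProduct.mk_apply, TensorProduct.lid_tmul, one_smul]
  exact Q.counit_left a

theorem lTensor_counit_comp_comul :
    Q.counit.toLinearMap.lTensor H ∘ₗ Q.comul.toLinearMap
      = (TensorProduct.mk k H k).flip 1 := by
  ext a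
  refine (TensorProduct.rid k H).injective ?_
  simp only [LinearMap.comp_apply, LinearMap.flip_apply, TensorProduct.mk_apply,
    TensorProduct.rid_tmul, one_smul]
  exact Q.counit_right a

end QuasiBialgebra

namespace QuasiHopf

abbrev toHopfAlgebra (Qh : QuasiHopf k H)
    (hPhi : ((Qh.assocEl : (H ⊗[k] (H ⊗[k] H))ˣ) : H ⊗[k] (H ⊗[k] H)) = 1)
    (halpha : Qh.alpha = 1) (hbeta : Qh.beta = 1) : HopfAlgebra k H :=
  letI : Coalgebra k H :=
    { comul := Qh.comul.toLinearMap
      counit := Qh.counit.toLinearMap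
      coassoc := Qh.comul_coassoc hPhi
      rTensor_counit_comp_comul := Qh.rTensor_counit_comp_comul
      lTensor_counit_comp_comul := Qh.lTensor_counit_comp_comul }
  { Bialgebra.mk' k H Qh.counit.map_one (Qh.counit.map_mul _ _) Qh.comul.map_one
      (Qh.comul.map_mul _ _) with
    antipode := Qh.S
    mul_antipode_rTensor_comul := by
      ext a
      have key := Qh.antipode_left a
      simp only [halpha, LinearMap.mulRight_one, LinearMap.id_comp, Algebra.smul_def,
        mul_one] at key
      exact key
    mul_antipode_lTensor_comul := by
      ext a
      have key := Qh.antipode_right a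
      simp only [hbeta, LinearMap.mulLeft_one, LinearMap.id_comp, Algebra.smul_def,
        mul_one] at key
      exact key }

end QuasiHopf

open Coalgebra HopfAlgebra

section ConvAct

variable {R A C V : Type*} [CommSemiring R] [AddCommMonoid A] [Module R A]
  [AddCommMonoid C] [Module R C] [AddCommMonoid V] [Module R V]

def convAct (δ : C →ₗ[R] C ⊗[R] C) (act : A →ₗ[R] Module.End R V)
    (f : C →ₗ[R] A) (B : C →ₗ[R] V) : C →ₗ[R] V :=
  TensorProduct.lift ((act ∘ₗ f).compl₂ B) ∘ₗ δ

theorem convAct_apply_of_eq {δ : C →ₗ[R] C ⊗[R] C} (act : A →ₗ[R] Module.End R V)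
    (f : C →ₗ[R] A) (B : C →ₗ[R] V) {c : C} {ι : Type*} {s : Finset ι} {x y : ι → C}
    (hc : δ c = ∑ i ∈ s, x i ⊗ₜ[R] y i) :
    convAct δ act f B c = ∑ i ∈ s, act (f (x i)) (B (y i)) := by
  simp [convAct, hc, map_sum]

end ConvAct

namespace Coalgebra

variable {R A : Type*} [CommSemiring R] [Semiring A] [Algebra R A] [Coalgebra R A]
  {ι : Type*} {κ : ι → Type*} {a : A}

theorem sum_sum_tmul_eq_one_tmul (φ : A ⊗[R] A →ₗ[R] A)
    (hφ : φ ∘ₗ comul = Algebra.linearMap R A ∘ₗ counit) (𝓡 : Repr R a ι)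
    (𝓡₂ : ∀ i, Repr R (𝓡.right i) (κ i)) :
    ∑ i ∈ 𝓡.index, ∑ j ∈ (𝓡₂ i).index, φ (𝓡.left i ⊗ₜ (𝓡₂ i).left j) ⊗ₜ[R] (𝓡₂ i).right j
      = 1 ⊗ₜ[R] a := by
  have coassoc := congrArg
    (φ.rTensor A ∘ₗ (_root_.TensorProduct.assoc R A A A).symm.toLinearMap)
    (sum_tmul_tmul_eq 𝓡 (fun i => ℛ R (𝓡.left i)) 𝓡₂)
  simp only [map_sum, LinearMap.comp_apply, LinearEquiv.coe_coe,
    _root_.TensorProduct.assoc_symm_tmul, LinearMap.rTensor_tmul] at coassoc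
  rw [← coassoc]
  have counit_left : ∀ i ∈ 𝓡.index, ∑ j ∈ (ℛ R (𝓡.left i)).index,
      φ ((ℛ R (𝓡.left i)).left j ⊗ₜ (ℛ R (𝓡.left i)).right j) ⊗ₜ[R] 𝓡.right i
        = (1 : A) ⊗ₜ[R] (counit (𝓡.left i) • 𝓡.right i) := fun i _ => by
    rw [← _root_.TensorProduct.sum_tmul, ← map_sum, (ℛ R (𝓡.left i)).eq,
      ← LinearMap.comp_apply, hφ, LinearMap.comp_apply, Algebra.linearMap_apply,
      Algebra.algebraMap_eq_smul_one, _root_.TensorProduct.smul_tmul]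
  rw [Finset.sum_congr rfl counit_left, ← _root_.TensorProduct.tmul_sum, sum_counit_smul]

end Coalgebra

section HopfAlgebra

variable {R A V : Type*} [CommSemiring R] [Semiring A] [HopfAlgebra R A]
  [AddCommMonoid V] [Module R V] {act : A →ₗ[R] Module.End R V}

theorem convAct_convAct_eq_self (act_one : act 1 = 1) (f g : A →ₗ[R] A)
    (φ : A ⊗[R] A →ₗ[R] A) (hφ : φ ∘ₗ comul = Algebra.linearMap R A ∘ₗ counit)
    (hfg : ∀ x y, act (g x) * act (f y) = act (antipode R (φ (x ⊗ₜ y))))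
    (B : A →ₗ[R] V) :
    convAct comul act g (convAct comul act f B) = B := by
  ext a
  have key := congrArg (TensorProduct.lift ((act ∘ₗ antipode R).compl₂ B))
    (sum_sum_tmul_eq_one_tmul φ hφ (ℛ R a) (fun i => ℛ R ((ℛ R a).right i)))
  simp only [map_sum, TensorProduct.lift.tmul, LinearMap.compl₂_apply, LinearMap.comp_apply,
    antipode_one, act_one, Module.End.one_apply, ← hfg, Module.End.mul_apply] at key
  rw [convAct_apply_of_eq act _ _ (ℛ R a).eq.symm, ← key]
  refine Finset.sum_congr rfl fun i _ => ?_
  rw [convAct_apply_of_eq act _ _ (ℛ R _).eq.symm, map_sum]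

theorem convAct_antipode_convAct_antipode_sq
    (act_mul : ∀ x y, act (x * y) = act y * act x) (act_one : act 1 = 1) (B : A →ₗ[R] V) :
    convAct comul act (antipode R) (convAct comul act (antipode R ∘ₗ antipode R) B) = B :=
  convAct_convAct_eq_self act_one _ _ (LinearMap.mul' R A ∘ₗ (antipode R).lTensor A)
    (by rw [LinearMap.comp_assoc]; exact mul_antipode_lTensor_comul)
    (fun x y => by simp [antipode_mul_antidistrib, act_mul]) B

theorem convAct_antipode_sq_convAct_antipode
    (act_mul : ∀ x y, act (x * y) = act y * act x) (act_one : act 1 = 1) (B : A →ₗ[R] V) :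
    convAct comul act (antipode R ∘ₗ antipode R) (convAct comul act (antipode R) B) = B :=
  convAct_convAct_eq_self act_one _ _ (LinearMap.mul' R A ∘ₗ (antipode R).rTensor A)
    (by rw [LinearMap.comp_assoc]; exact mul_antipode_rTensor_comul)
    (fun x y => by simp [antipode_mul_antidistrib, act_mul]) B

end HopfAlgebra

section RightMul

variable {R A : Type*} [CommSemiring R] [Semiring A] [Algebra R A]
  (M : Type*) [AddCommMonoid M] [Module R M]

def tensorRightMul : A →ₗ[R] Module.End R (M ⊗[R] A) :=
  LinearMap.lTensorHom M ∘ₗ (LinearMap.mul R A).flip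

@[simp] theorem tensorRightMul_apply (x : A) :
    tensorRightMul M x = (LinearMap.mulRight R x).lTensor M := rfl

theorem tensorRightMul_mul (x y : A) :
    tensorRightMul (R := R) M (x * y) = tensorRightMul M y * tensorRightMul M x := by
  simp [LinearMap.mulRight_mul, LinearMap.lTensor_comp, Module.End.mul_eq_comp]

theorem tensorRightMul_one : tensorRightMul (R := R) (A := A) M 1 = 1 := by
  simp [LinearMap.mulRight_one, Module.End.one_eq_id]

end RightMul

def coactAfterAct {M : Type} [AddCommGroup M] [Module k M] (ρM : H →ₐ[k] Module.End k M)
    (coact : M →ₗ[k] M ⊗[k] H) (m : M) : H →ₗ[k] M ⊗[k] H :=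
  coact ∘ₗ ρM.toLinearMap.flip m

namespace QuasiHopf

variable (Qh : QuasiHopf k H) {M : Type} [AddCommGroup M] [Module k M]
  (ρM : H →ₐ[k] Module.End k M) (coact : M →ₗ[k] M ⊗[k] H)

theorem diagActMH_tmul (a b : H) :
    Qh.diagActMH ρM (a ⊗ₜ b) = TensorProduct.map (ρM a) (LinearMap.mulLeft k b) := rfl

theorem diagActMH_comp_tensorRightMul (w : H ⊗[k] H) (x : H) :
    Qh.diagActMH ρM w ∘ₗ tensorRightMul M x = tensorRightMul M x ∘ₗ Qh.diagActMH ρM w := by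
  induction w using TensorProduct.induction_on with
  | zero => simp
  | tmul a b =>
    have hcomm : LinearMap.mulLeft k b ∘ₗ LinearMap.mulRight k x
        = LinearMap.mulRight k x ∘ₗ LinearMap.mulLeft k b :=
      (LinearMap.commute_mulLeft_right b x).eq
    simp only [diagActMH_tmul, tensorRightMul_apply, LinearMap.map_comp_lTensor,
      LinearMap.lTensor_comp_map, hcomm]
  | add w w' hw hw' => simp only [map_add, LinearMap.add_comp, LinearMap.comp_add, hw, hw']

def actAfterCoact (m : M) : H →ₗ[k] M ⊗[k] H :=
  (Qh.diagActMH ρM ∘ₗ Qh.comul.toLinearMap).flip (coact m)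

variable {Qh ρM coact} in
theorem actAfterCoact_apply_of_eq (m : M) {h : H} {ι : Type} {s : Finset ι} {h1 h2 : ι → H}
    (hΔ : Qh.comul h = ∑ i ∈ s, h1 i ⊗ₜ[k] h2 i) :
    Qh.actAfterCoact ρM coact m h
      = ∑ i ∈ s, TensorProduct.map (ρM (h1 i)) (LinearMap.mulLeft k (h2 i)) (coact m) := by
  simp [actAfterCoact, hΔ, map_sum, diagActMH_tmul]

theorem compatI_iff :
    Qh.CompatI ρM coact ↔ ∀ m, Qh.actAfterCoact ρM coact m
      = convAct Qh.comul.toLinearMap (tensorRightMul M) (Qh.S ∘ₗ Qh.S)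
          (coactAfterAct ρM coact m) := by
  constructor
  · intro hI m
    ext h
    obtain ⟨s, hs⟩ := TensorProduct.exists_finset (R := k) (Qh.comul h)
    rw [actAfterCoact_apply_of_eq m hs, convAct_apply_of_eq _ _ _ hs]
    exact hI h m _ s Prod.fst Prod.snd hs
  · intro hI h m ι s h1 h2 hΔ
    have := LinearMap.congr_fun (hI m) h
    rwa [actAfterCoact_apply_of_eq m hΔ, convAct_apply_of_eq _ _ _ hΔ] at this

theorem compatII_iff :
    Qh.CompatII ρM coact ↔ ∀ m, coactAfterAct ρM coact m
      = convAct Qh.comul.toLinearMap (tensorRightMul M) Qh.S (Qh.actAfterCoact ρM coact m) := by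
  have sum_eq : ∀ (m : M) {ι : Type} (s : Finset ι) (h1 h2 : ι → H),
      ∑ i ∈ s, Qh.diagActMH ρM (Qh.comul (h2 i))
          ((LinearMap.mulRight k (Qh.S (h1 i))).lTensor M (coact m))
        = ∑ i ∈ s, tensorRightMul M (Qh.S (h1 i)) (Qh.actAfterCoact ρM coact m (h2 i)) :=
    fun m _ s h1 h2 => Finset.sum_congr rfl fun i _ =>
      LinearMap.congr_fun (Qh.diagActMH_comp_tensorRightMul ρM _ _) (coact m)
  constructor
  · intro hII m
    ext h
    obtain ⟨s, hs⟩ := TensorProduct.exists_finset (R := k) (Qh.comul h)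
    rw [convAct_apply_of_eq _ _ _ hs, ← sum_eq]
    exact hII h m _ s Prod.fst Prod.snd hs
  · intro hII h m ι s h1 h2 hΔ
    have := LinearMap.congr_fun (hII m) h
    rwa [convAct_apply_of_eq _ _ _ hΔ, ← sum_eq] at this

end QuasiHopf

/-- For a Hopf algebra `H` (a quasi-Hopf algebra with
trivial associator and `α = β = 1`) with invertible antipode, a `k`-linear
map `ρ : M → M ⊗ H` satisfies the type I compatibility
`h¹ m⟨0⟩ ⊗ h² m⟨1⟩ = (h² m)⟨0⟩ ⊗ (h² m)⟨1⟩ S²(h¹)` if and only if it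
satisfies the type II compatibility
`(h m)⟨0⟩ ⊗ (h m)⟨1⟩ = h²¹ m⟨0⟩ ⊗ h²² m⟨1⟩ S(h¹)`. -/
theorem hopf_typeI_iff_typeII
    (M : Type) [AddCommGroup M] [Module k M]
    (Qh : QuasiHopf k H)
    (hPhi : ((Qh.assocEl : (H ⊗[k] (H ⊗[k] H))ˣ) :
      H ⊗[k] (H ⊗[k] H)) = 1)
    (halpha : Qh.alpha = 1) (hbeta : Qh.beta = 1)
    (ρM : H →ₐ[k] Module.End k M) (coact : M →ₗ[k] M ⊗[k] H) :
    Qh.CompatI ρM coact ↔ Qh.CompatII ρM coact := by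
  let _ := Qh.toHopfAlgebra hPhi halpha hbeta
  rw [Qh.compatI_iff, Qh.compatII_iff]
  refine forall_congr' fun m => ⟨fun hI => ?_, fun hII => ?_⟩
  · rw [hI]
    exact (convAct_antipode_convAct_antipode_sq (tensorRightMul_mul M)
      (tensorRightMul_one M) _).symm
  · rw [hII]
    exact (convAct_antipode_sq_convAct_antipode (tensorRightMul_mul M)
      (tensorRightMul_one M) _).symm
end
end
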